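/- arXiv:gr-qc/0110114 — 5 statements merged into one kernel-verified Lean document; each statement's English description precedes it below -/
import Mathlib

section
/- Let a, b, c be complex numbers such that c is not a nonpositive integer and Re(c - a - b) > 0. Then the series Σ_{n=0}^∞ (a)_n (b)_n / ((c)_n · n!) converges and its sum equals Γ(c)·Γ(c-a-b) / (Γ(c-a)·Γ(c-b)), where Γ is the complex Gamma function. (Gauss's theorem: ₂F₁(a,b;c;1) = Γ(c)Γ(c-a-b)/(Γ(c-a)Γ(c-b)).) -/
open Complex Filter Set MeasureTheory

/-- The `n`-th term of the Gauss hypergeometric series `₂F₁(a,b;c;z)`: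
`(a)ₙ (b)ₙ / ((c)ₙ n!) · zⁿ`, where `(x)ₙ` is the rising Pochhammer symbol. -/
noncomputable def hypTerm (a b c z : ℂ) (n : ℕ) : ℂ :=
  (ascPochhammer ℂ n).eval a * (ascPochhammer ℂ n).eval b /
    ((ascPochhammer ℂ n).eval c * (n.factorial : ℂ)) * z ^ n

/-!
Write `F(c) = ∑ₙ tₙ` with `tₙ = (a)ₙ (b)ₙ / ((c)ₙ n!)`. Euler's limit formula
`(s)ₙ n^(1-s) / n! → 1/Γ(s)` shows that `tₙ = O(n^(a+b-c-1))`, so the series converges.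
Telescoping, with boundary term `c n tₙ → 0`, gives the contiguous relation
`c (c-a-b) F(c) = (c-a)(c-b) F(c+1)`; iterating it,
`F(c) = F(c+m) · (c-a)ₘ (c-b)ₘ / ((c)ₘ (c-a-b)ₘ)` for every `m`. As `m → ∞`, `F(c+m) → 1` by
dominated convergence, while the Pochhammer quotient tends to `Γ(c) Γ(c-a-b) / (Γ(c-a) Γ(c-b))`,
again by Euler's formula.
-/

open Topology Asymptotics
open scoped Nat

theorem ascPochhammer_eval_eq_prod_range {R : Type*} [CommSemiring R] (s : R) (n : ℕ) :
    (ascPochhammer R n).eval s = ∏ j ∈ Finset.range n, (s + j) := by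
  induction n with
  | zero => simp
  | succ n ih => rw [ascPochhammer_succ_eval, ih, Finset.prod_range_succ]

theorem ascPochhammer_eval_ne_zero {R : Type*} [Ring R] [IsDomain R] {s : R}
    (hs : ∀ n : ℕ, s ≠ -n) (n : ℕ) : (ascPochhammer R n).eval s ≠ 0 := by
  rw [Ne, ascPochhammer_eval_eq_zero_iff]
  rintro ⟨k, -, hk⟩
  exact hs k (by rw [hk, neg_neg])

theorem ne_neg_natCast_of_re_pos {s : ℂ} (hs : 0 < s.re) (n : ℕ) : s ≠ -n := by
  rintro rfl
  simp only [neg_re, natCast_re, Left.neg_pos_iff] at hs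
  exact (Nat.cast_nonneg n).not_gt hs

/-- Euler's limit formula for `1 / Γ`. It holds at the poles too, where Mathlib's `Γ` takes the
value `0`: there `(s)ₙ` vanishes for large `n`. -/
theorem tendsto_ascPochhammer_mul_cpow_div_factorial (s : ℂ) :
    Tendsto (fun n : ℕ => (ascPochhammer ℂ n).eval s * (n : ℂ) ^ (1 - s) / n !) atTop
      (𝓝 (Gamma s)⁻¹) := by
  by_cases hs : ∃ m : ℕ, s = -m
  · obtain ⟨m, rfl⟩ := hs
    rw [Gamma_neg_nat_eq_zero, inv_zero]
    refine tendsto_const_nhds.congr' ?_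
    filter_upwards [eventually_gt_atTop m] with n hn
    rw [(ascPochhammer_eval_eq_zero_iff n _).2 ⟨m, hn, (neg_neg _).symm⟩, zero_mul, zero_div]
  push Not at hs
  have hGammaSeq : ∀ n : ℕ, n ≠ 0 → (GammaSeq s n)⁻¹ * (n / (n + s)) =
      (ascPochhammer ℂ n).eval s * (n : ℂ) ^ (1 - s) / n ! := by
    intro n hn
    have hn' : (n : ℂ) ≠ 0 := Nat.cast_ne_zero.2 hn
    have hsn : (n : ℂ) + s ≠ 0 := fun h => hs n (by linear_combination h)
    rw [GammaSeq, ← ascPochhammer_eval_eq_prod_range, ascPochhammer_succ_eval, inv_div,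
      cpow_sub _ _ hn', cpow_one]
    field_simp [cpow_ne_zero_iff_of_exponent_ne_zero]
    ring
  rw [← mul_one (Gamma s)⁻¹]
  exact (((GammaSeq_tendsto_Gamma s).inv₀ (Gamma_ne_zero hs)).mul
    (tendsto_natCast_div_add_atTop s)).congr' (eventually_ne_atTop 0 |>.mono hGammaSeq)

theorem tendsto_ascPochhammer_ratio (x y : ℂ) {u v : ℂ} (hu : Gamma u ≠ 0) (hv : Gamma v ≠ 0) :
    Tendsto (fun n : ℕ => (ascPochhammer ℂ n).eval x * (ascPochhammer ℂ n).eval y /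
        ((ascPochhammer ℂ n).eval u * (ascPochhammer ℂ n).eval v) * (n : ℂ) ^ (u + v - x - y))
      atTop (𝓝 (Gamma u * Gamma v / (Gamma x * Gamma y))) := by
  have h := ((tendsto_ascPochhammer_mul_cpow_div_factorial x).mul
    (tendsto_ascPochhammer_mul_cpow_div_factorial y)).div
    ((tendsto_ascPochhammer_mul_cpow_div_factorial u).mul
    (tendsto_ascPochhammer_mul_cpow_div_factorial v)) (by simp [hu, hv])
  rw [show (Gamma x)⁻¹ * (Gamma y)⁻¹ / ((Gamma u)⁻¹ * (Gamma v)⁻¹) =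
      Gamma u * Gamma v / (Gamma x * Gamma y) by
    simp only [div_eq_mul_inv, mul_inv, inv_inv]; ring] at h
  refine h.congr' ?_
  filter_upwards [eventually_ne_atTop 0] with n hn
  have hn' : (n : ℂ) ≠ 0 := Nat.cast_ne_zero.2 hn
  have hpow : (n : ℂ) ^ (1 - x) * (n : ℂ) ^ (1 - y) / ((n : ℂ) ^ (1 - u) * (n : ℂ) ^ (1 - v)) =
      (n : ℂ) ^ (u + v - x - y) := by
    rw [div_eq_iff (by simp [hn'])]
    simp only [← cpow_add _ _ hn']
    ring_nf
  have hf : (n ! : ℂ) ≠ 0 := Nat.cast_ne_zero.2 (Nat.factorial_ne_zero n)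
  rw [Pi.div_apply, ← hpow]
  field_simp

theorem isBigO_hypTerm_one (a b : ℂ) {c : ℂ} (hc : Gamma c ≠ 0) :
    hypTerm a b c 1 =O[atTop] fun n : ℕ => (n : ℝ) ^ ((a + b - c).re - 1) := by
  have hratio := (tendsto_ascPochhammer_ratio a b hc (by simp : Gamma 1 ≠ 0)).isBigO_one ℝ
  have hpow : (fun n : ℕ => (n : ℂ) ^ (a + b - c - 1)) =O[atTop]
      fun n : ℕ => (n : ℝ) ^ ((a + b - c).re - 1) := by
    refine IsBigO.of_bound 1 ?_
    filter_upwards [eventually_gt_atTop 0] with n hn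
    rw [norm_natCast_cpow_of_pos hn, Real.norm_of_nonneg (by positivity)]
    simp
  refine (hratio.mul hpow).congr' ?_ (by simp)
  filter_upwards [eventually_ne_atTop 0] with n hn
  have hn' : (n : ℂ) ≠ 0 := Nat.cast_ne_zero.2 hn
  rw [mul_assoc, ← cpow_add _ _ hn', show c + 1 - a - b + (a + b - c - 1) = 0 by ring, cpow_zero,
    ascPochhammer_eval_one]
  simp [hypTerm]

theorem summable_hypTerm_one {a b c : ℂ} (hc : ∀ n : ℕ, c ≠ -n) (h : 0 < (c - a - b).re) :
    Summable (hypTerm a b c 1) :=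
  summable_of_isBigO_nat (Real.summable_nat_rpow.2 (by simp at h ⊢; linarith))
    (isBigO_hypTerm_one a b (Gamma_ne_zero hc))

theorem tendsto_natCast_mul_hypTerm_one {a b c : ℂ} (hc : ∀ n : ℕ, c ≠ -n)
    (h : 0 < (c - a - b).re) :
    Tendsto (fun n : ℕ => (n : ℂ) * hypTerm a b c 1 n) atTop (𝓝 0) := by
  have hn : (fun n : ℕ => (n : ℂ)) =O[atTop] fun n : ℕ => (n : ℝ) :=
    IsBigO.of_bound 1 (by simp)
  refine ((hn.mul (isBigO_hypTerm_one a b (Gamma_ne_zero hc))).trans_tendsto ?_)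
  have hr : (a + b - c).re < 0 := by simp at h ⊢; linarith
  refine ((tendsto_rpow_neg_atTop (neg_pos.2 hr)).comp tendsto_natCast_atTop_atTop).congr' ?_
  filter_upwards [eventually_gt_atTop 0] with n hn
  rw [Function.comp_apply, neg_neg,
    ← Real.rpow_one_add' (by positivity) (by rw [add_sub_cancel]; exact hr.ne)]
  simp

theorem hypTerm_succ (a b c z : ℂ) (n : ℕ) :
    hypTerm a b c z (n + 1) =
      hypTerm a b c z n * ((a + n) * (b + n) * z / ((c + n) * (n + 1))) := by
  simp only [hypTerm, ascPochhammer_succ_eval, Nat.factorial_succ, Nat.cast_mul, Nat.cast_succ,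
    pow_succ, div_eq_mul_inv, mul_inv]
  ring

theorem hypTerm_add_one (a b z : ℂ) {c : ℂ} (hc : ∀ n : ℕ, c ≠ -n) (n : ℕ) :
    hypTerm a b (c + 1) z n = c / (c + n) * hypTerm a b c z n := by
  have hcn : c + n ≠ 0 := fun h => hc n (by linear_combination h)
  have hshift :
      (ascPochhammer ℂ n).eval (c + 1) * c = (ascPochhammer ℂ n).eval c * (c + n) := by
    rw [← ascPochhammer_succ_eval, ascPochhammer_succ_left, Polynomial.eval_mul, Polynomial.eval_X,
      Polynomial.eval_comp, mul_comm]
    simp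
  have hc₀ : (ascPochhammer ℂ n).eval c ≠ 0 := ascPochhammer_eval_ne_zero hc n
  have hc₁ : (ascPochhammer ℂ n).eval (c + 1) ≠ 0 := by
    intro h0
    rw [h0, zero_mul] at hshift
    exact mul_ne_zero hc₀ hcn hshift.symm
  have hf : (n ! : ℂ) ≠ 0 := Nat.cast_ne_zero.2 (Nat.factorial_ne_zero n)
  simp only [hypTerm]
  field_simp
  linear_combination -((ascPochhammer ℂ n).eval a * (ascPochhammer ℂ n).eval b * z ^ n) * hshift

theorem hypTerm_one_contiguous {a b c : ℂ} (hc : ∀ n : ℕ, c ≠ -n) (n : ℕ) :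
    c * (c - a - b) * hypTerm a b c 1 n - (c - a) * (c - b) * hypTerm a b (c + 1) 1 n =
      c * (n * hypTerm a b c 1 n - (n + 1) * hypTerm a b c 1 (n + 1)) := by
  have hcn : c + n ≠ 0 := fun h => hc n (by linear_combination h)
  rw [hypTerm_succ, hypTerm_add_one a b 1 hc]
  field_simp
  ring

theorem tsum_hypTerm_one_contiguous {a b c : ℂ} (hc : ∀ n : ℕ, c ≠ -n)
    (h : 0 < (c - a - b).re) :
    c * (c - a - b) * ∑' n, hypTerm a b c 1 n =
      (c - a) * (c - b) * ∑' n, hypTerm a b (c + 1) 1 n := by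
  have hc₁ : ∀ n : ℕ, c + 1 ≠ -n := fun n h' =>
    hc (n + 1) (by push_cast; linear_combination h')
  have h₁ : 0 < (c + 1 - a - b).re := by simp at h ⊢; linarith
  have hsum := (((summable_hypTerm_one hc h).hasSum.mul_left (c * (c - a - b))).sub
    ((summable_hypTerm_one hc₁ h₁).hasSum.mul_left ((c - a) * (c - b)))).tendsto_sum_nat
  have htelescope : ∀ n : ℕ, ∑ i ∈ Finset.range n, (i * hypTerm a b c 1 i -
      (i + 1) * hypTerm a b c 1 (i + 1)) = -(n * hypTerm a b c 1 n) := fun n => by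
    simpa using Finset.sum_range_sub' (fun i : ℕ => (i : ℂ) * hypTerm a b c 1 i) n
  simp_rw [hypTerm_one_contiguous hc, ← Finset.mul_sum, htelescope] at hsum
  have hzero := (tendsto_natCast_mul_hypTerm_one hc h).neg.const_mul c
  rw [neg_zero, mul_zero] at hzero
  exact sub_eq_zero.1 (tendsto_nhds_unique hsum hzero)

theorem tsum_hypTerm_one_mul_ascPochhammer {a b c : ℂ} (hc : ∀ n : ℕ, c ≠ -n)
    (h : 0 < (c - a - b).re) (m : ℕ) :
    (∑' n, hypTerm a b c 1 n) *
        ((ascPochhammer ℂ m).eval c * (ascPochhammer ℂ m).eval (c - a - b)) =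
      (∑' n, hypTerm a b (c + m) 1 n) *
        ((ascPochhammer ℂ m).eval (c - a) * (ascPochhammer ℂ m).eval (c - b)) := by
  induction m with
  | zero => simp
  | succ m ih =>
    have hcm : ∀ n : ℕ, c + m ≠ -n := fun n h' =>
      hc (n + m) (by push_cast; linear_combination h')
    have hm : 0 < (c + m - a - b).re := by simp at h ⊢; linarith [m.cast_nonneg (α := ℝ)]
    have hstep := tsum_hypTerm_one_contiguous hcm hm
    simp only [ascPochhammer_succ_eval, Nat.cast_succ, ← add_assoc]
    linear_combination ((c + m) * (c + m - a - b)) * ih +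
      ((ascPochhammer ℂ m).eval (c - a) * (ascPochhammer ℂ m).eval (c - b)) * hstep

theorem norm_le_norm_add_ofReal {z : ℂ} (hz : 0 ≤ z.re) {t : ℝ} (ht : 0 ≤ t) :
    ‖z‖ ≤ ‖z + t‖ := by
  rw [← sq_le_sq₀ (norm_nonneg _) (norm_nonneg _), Complex.sq_norm, Complex.sq_norm,
    normSq_apply, normSq_apply]
  simp only [add_re, ofReal_re, add_im, ofReal_im, add_zero]
  nlinarith

theorem norm_ascPochhammer_eval_le_add_ofReal {z : ℂ} (hz : 0 ≤ z.re) {t : ℝ} (ht : 0 ≤ t)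
    (n : ℕ) : ‖(ascPochhammer ℂ n).eval z‖ ≤ ‖(ascPochhammer ℂ n).eval (z + t)‖ := by
  induction n with
  | zero => simp
  | succ n ih =>
    simp only [ascPochhammer_succ_eval, norm_mul]
    have hfactor := norm_le_norm_add_ofReal (z := z + n) (by simp; positivity) ht
    rw [add_right_comm] at hfactor
    exact mul_le_mul ih hfactor (norm_nonneg _) (norm_nonneg _)

theorem tendsto_inv_ascPochhammer_eval_add_nat (c : ℂ) {k : ℕ} (hk : k ≠ 0) :
    Tendsto (fun m : ℕ => ((ascPochhammer ℂ k).eval (c + m))⁻¹) atTop (𝓝 0) := by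
  have hdeg : 0 < (ascPochhammer ℂ k).degree := by
    rw [Polynomial.degree_eq_natDegree (monic_ascPochhammer ℂ k).ne_zero, ascPochhammer_natDegree]
    exact_mod_cast Nat.pos_of_ne_zero hk
  have hnorm : Tendsto (fun m : ℕ => ‖c + m‖) atTop atTop :=
    tendsto_atTop_mono (fun m => by simpa [add_comm] using norm_sub_norm_le (m : ℂ) (-c))
      (tendsto_atTop_add_const_right _ (-‖c‖) tendsto_natCast_atTop_atTop)
  rw [tendsto_zero_iff_norm_tendsto_zero]
  exact (Polynomial.tendsto_norm_atTop _ hdeg hnorm).inv_tendsto_atTop.congr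
    fun m => (norm_inv _).symm

theorem tendsto_tsum_hypTerm_one_add_nat {a b c : ℂ} (h : 0 < (c - a - b).re) :
    Tendsto (fun m : ℕ => ∑' n, hypTerm a b (c + m) 1 n) atTop (𝓝 1) := by
  -- Once `Re (c + m₀) > 0`, the terms for `c + m₀` dominate those for every `c + m` with `m ≥ m₀`.
  obtain ⟨m₀, hm₀⟩ := exists_nat_gt (-c.re)
  have hre : 0 < (c + m₀).re := by simp; linarith
  have hdom : Summable fun n => ‖hypTerm a b (c + m₀) 1 n‖ :=
    (summable_hypTerm_one (ne_neg_natCast_of_re_pos hre) (by simp at h ⊢; linarith)).norm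
  rw [show 𝓝 (1 : ℂ) = 𝓝 (∑' n : ℕ, if n = 0 then 1 else 0) by simp]
  refine tendsto_tsum_of_dominated_convergence hdom (fun n => ?_) ?_
  · rcases eq_or_ne n 0 with rfl | hn
    · simp [hypTerm]
    · have hterm : ∀ m : ℕ, hypTerm a b (c + m) 1 n = (ascPochhammer ℂ n).eval a *
          (ascPochhammer ℂ n).eval b / n ! * ((ascPochhammer ℂ n).eval (c + m))⁻¹ := fun m => by
        simp only [hypTerm, one_pow, mul_one, div_eq_mul_inv, mul_inv]; ring
      simpa [hterm, hn] using (tendsto_inv_ascPochhammer_eval_add_nat c hn).const_mul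
        ((ascPochhammer ℂ n).eval a * (ascPochhammer ℂ n).eval b / n !)
  · filter_upwards [eventually_ge_atTop m₀] with m hm n
    obtain ⟨t, rfl⟩ := Nat.exists_eq_add_of_le hm
    have hP := norm_ascPochhammer_eval_le_add_ofReal hre.le t.cast_nonneg n
    have hP₀ : (ascPochhammer ℂ n).eval (c + m₀) ≠ 0 :=
      ascPochhammer_eval_ne_zero (ne_neg_natCast_of_re_pos hre) n
    have hf : (n ! : ℂ) ≠ 0 := Nat.cast_ne_zero.2 (Nat.factorial_ne_zero n)
    rw [ofReal_natCast, add_assoc, ← Nat.cast_add] at hP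
    simp only [hypTerm, norm_mul, norm_div]
    gcongr

/-- Gauss's theorem: for `c` not a nonpositive integer and `Re (c-a-b) > 0`, the series
`₂F₁(a,b;c;1)` converges with sum `Γ(c)Γ(c-a-b) / (Γ(c-a)Γ(c-b))`. -/
theorem gauss_hypergeometric_at_one (a b c : ℂ)
    (hc : ∀ n : ℕ, c ≠ -(n : ℂ)) (h : 0 < (c - a - b).re) :
    HasSum (hypTerm a b c 1)
      (Complex.Gamma c * Complex.Gamma (c - a - b) /
        (Complex.Gamma (c - a) * Complex.Gamma (c - b))) := by
  have hlim := (tendsto_tsum_hypTerm_one_add_nat h).mul (tendsto_ascPochhammer_ratio (c - a) (c - b)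
    (Gamma_ne_zero hc) (Gamma_ne_zero_of_re_pos h))
  rw [one_mul] at hlim
  have hconst : ∀ m : ℕ, (∑' n, hypTerm a b (c + m) 1 n) *
      ((ascPochhammer ℂ m).eval (c - a) * (ascPochhammer ℂ m).eval (c - b) /
        ((ascPochhammer ℂ m).eval c * (ascPochhammer ℂ m).eval (c - a - b)) *
        (m : ℂ) ^ (c + (c - a - b) - (c - a) - (c - b))) = ∑' n, hypTerm a b c 1 n := fun m => by
    have hne := mul_ne_zero (ascPochhammer_eval_ne_zero hc m)
      (ascPochhammer_eval_ne_zero (ne_neg_natCast_of_re_pos h) m)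
    rw [show c + (c - a - b) - (c - a) - (c - b) = 0 by ring, cpow_zero, mul_one, ← mul_div_assoc,
      ← tsum_hypTerm_one_mul_ascPochhammer hc h, mul_div_assoc, div_self hne, mul_one]
  rw [← tendsto_nhds_unique tendsto_const_nhds (hlim.congr hconst)]
  exact (summable_hypTerm_one hc h).hasSum
end

section
/- Let a, b, c be complex numbers such that c is not a nonpositive integer and Re(c - a - b) > 0. Then for every complex z with |z| ≤ 1, the hypergeometric series Σ_{n=0}^∞ (a)_n (b)_n / ((c)_n · n!) · z^n converges absolutely (i.e. the family of terms is summable). -/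
open Complex Filter Set MeasureTheory
open Topology

lemma ascPochhammer_eval_prod (x : ℂ) (n : ℕ) :
    (ascPochhammer ℂ n).eval x = ∏ j ∈ Finset.range n, (x + j) := by
  induction n with
  | zero => simp
  | succ n ih => rw [ascPochhammer_succ_eval, Finset.prod_range_succ, ih]

lemma poch_ne_zero {x : ℂ} (hx : ∀ m : ℕ, x ≠ -(m:ℂ)) (n : ℕ) :
    (ascPochhammer ℂ n).eval x ≠ 0 := by
  rw [ascPochhammer_eval_prod]
  exact Finset.prod_ne_zero_iff.mpr fun j _ hj =>
    hx j (eq_neg_of_add_eq_zero_left hj)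

lemma gammaSeq_mul (x : ℂ) (hx : ∀ m : ℕ, x ≠ -(m:ℂ)) (n : ℕ) :
    Complex.GammaSeq x n * ((ascPochhammer ℂ n).eval x * (x + n)) =
      (n : ℂ) ^ x * n.factorial := by
  rw [Complex.GammaSeq, ascPochhammer_eval_prod, ← Finset.prod_range_succ]
  refine div_mul_cancel₀ _ ?_
  exact Finset.prod_ne_zero_iff.mpr fun j _ hj => hx j (eq_neg_of_add_eq_zero_left hj)

lemma key_identity (a b c : ℂ) (ha : ∀ m : ℕ, a ≠ -(m:ℂ)) (hb : ∀ m : ℕ, b ≠ -(m:ℂ))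
    (hc : ∀ m : ℕ, c ≠ -(m:ℂ)) {n : ℕ} (hn : n ≠ 0) :
    (ascPochhammer ℂ n).eval a * (ascPochhammer ℂ n).eval b /
      ((ascPochhammer ℂ n).eval c * (n.factorial : ℂ))
      * (Complex.GammaSeq a n * (a + n) * (Complex.GammaSeq b n * (b + n))) =
    (n : ℂ) ^ (a + b - c) * (Complex.GammaSeq c n * (c + n)) := by
  have hn0 : (n : ℂ) ≠ 0 := Nat.cast_ne_zero.mpr hn
  have hC := poch_ne_zero hc n
  have hfact : (n.factorial : ℂ) ≠ 0 := Nat.cast_ne_zero.mpr n.factorial_ne_zero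
  have h1 := gammaSeq_mul a ha n
  have h2 := gammaSeq_mul b hb n
  have h3 := gammaSeq_mul c hc n
  have hcpow : (n:ℂ)^(a+b-c) * (n:ℂ)^c = (n:ℂ)^a * (n:ℂ)^b := by
    rw [← cpow_add _ _ hn0, ← cpow_add _ _ hn0]; ring_nf
  have h12 := congrArg₂ (· * ·) h1 h2
  field_simp
  linear_combination h12 - (n:ℂ)^(a+b-c) * (n.factorial:ℂ) * h3 -
    (n.factorial:ℂ)^2 * hcpow

lemma gammaSeq_ne_zero (x : ℂ) (hx : ∀ m : ℕ, x ≠ -(m:ℂ)) {n : ℕ} (hn : n ≠ 0) :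
    Complex.GammaSeq x n ≠ 0 := by
  have h1 := gammaSeq_mul x hx n
  intro h0
  rw [h0, zero_mul] at h1
  have : (n:ℂ)^x * n.factorial ≠ 0 := mul_ne_zero
    (by rw [Complex.cpow_def_of_ne_zero (Nat.cast_ne_zero.mpr hn)]; exact Complex.exp_ne_zero _)
    (Nat.cast_ne_zero.mpr n.factorial_ne_zero)
  exact this h1.symm

lemma tendsto_ratio (x : ℂ) :
    Tendsto (fun n : ℕ => ‖x + n‖ / n) atTop (𝓝 1) := by
  have h0 : Tendsto (fun n : ℕ => x / n + 1) atTop (𝓝 1) := by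
    have : Tendsto (fun n : ℕ => x / n) atTop (𝓝 0) := by
      rw [tendsto_zero_iff_norm_tendsto_zero]
      have : ∀ n : ℕ, ‖x / (n:ℂ)‖ = ‖x‖ / n := by
        intro n; simp [norm_div]
      simp only [this]
      exact tendsto_const_div_atTop_nhds_zero_nat _
    simpa using this.add tendsto_const_nhds
  have h1 : Tendsto (fun n : ℕ => ‖x / n + 1‖) atTop (𝓝 1) := by
    have := (continuous_norm.tendsto 1).comp h0
    rw [norm_one] at this; exact this
  refine h1.congr' ?_
  filter_upwards [eventually_ge_atTop 1] with n hn
  have hn0 : (n:ℂ) ≠ 0 := Nat.cast_ne_zero.mpr (by omega)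
  have hcn : ((n:ℕ):ℝ) = ‖((n:ℕ):ℂ)‖ := by simp
  rw [hcn, ← norm_div]
  congr 1
  field_simp

lemma tendsto_main (a b c : ℂ) (ha : ∀ m : ℕ, a ≠ -(m:ℂ)) (hb : ∀ m : ℕ, b ≠ -(m:ℂ))
    (hc : ∀ m : ℕ, c ≠ -(m:ℂ)) :
    Tendsto (fun n : ℕ => ‖(ascPochhammer ℂ n).eval a * (ascPochhammer ℂ n).eval b /
      ((ascPochhammer ℂ n).eval c * (n.factorial : ℂ))‖ * (n:ℝ) ^ (1 + (c-a-b).re))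
      atTop (𝓝 (‖Complex.Gamma c‖ * 1 /
        (‖Complex.Gamma a‖ * ‖Complex.Gamma b‖))) := by
  set ε := (c-a-b).re with hε
  have hGa := (continuous_norm.tendsto _).comp (Complex.GammaSeq_tendsto_Gamma a)
  have hGb := (continuous_norm.tendsto _).comp (Complex.GammaSeq_tendsto_Gamma b)
  have hGc := (continuous_norm.tendsto _).comp (Complex.GammaSeq_tendsto_Gamma c)
  have hΓa : ‖Complex.Gamma a‖ ≠ 0 := norm_ne_zero_iff.mpr (Complex.Gamma_ne_zero ha)
  have hΓb : ‖Complex.Gamma b‖ ≠ 0 := norm_ne_zero_iff.mpr (Complex.Gamma_ne_zero hb)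
  have hr : Tendsto (fun n : ℕ => (‖c+n‖/n) /
      ((‖a+n‖/n) * (‖b+n‖/n))) atTop (𝓝 1) := by
    have := (tendsto_ratio c).div ((tendsto_ratio a).mul (tendsto_ratio b)) (by norm_num)
    rw [show (1:ℝ) / (1 * 1) = 1 by norm_num] at this; exact this
  have hG : Tendsto (fun n : ℕ => ‖Complex.GammaSeq c n‖ *
      ((‖c+n‖/n) / ((‖a+n‖/n) * (‖b+n‖/n))) /
      (‖Complex.GammaSeq a n‖ * ‖Complex.GammaSeq b n‖)) atTop
      (𝓝 (‖Complex.Gamma c‖ * 1 /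
        (‖Complex.Gamma a‖ * ‖Complex.Gamma b‖))) :=
    (hGc.mul hr).div (hGa.mul hGb) (mul_ne_zero hΓa hΓb)
  refine hG.congr' ?_
  filter_upwards [eventually_ge_atTop 1] with n hn
  have hn' : n ≠ 0 := by omega
  have hnR : (0:ℝ) < n := by exact_mod_cast Nat.pos_of_ne_zero hn'
  have E := congrArg (‖·‖) (key_identity a b c ha hb hc hn')
  simp only [norm_mul, norm_div] at E
  have hcast : ((n:ℕ):ℂ) = (((n:ℕ):ℝ):ℂ) := by push_cast; ring
  rw [hcast, Complex.norm_cpow_eq_rpow_re_of_pos hnR] at E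
  rw [← hcast] at E
  have hre : (a+b-c).re = -ε := by simp [hε, Complex.sub_re, Complex.add_re]; ring
  rw [hre] at E
  have hxa : ‖a+(n:ℂ)‖ ≠ 0 :=
    norm_ne_zero_iff.mpr fun h => ha n (eq_neg_of_add_eq_zero_left h)
  have hxb : ‖b+(n:ℂ)‖ ≠ 0 :=
    norm_ne_zero_iff.mpr fun h => hb n (eq_neg_of_add_eq_zero_left h)
  have hxc : ‖c+(n:ℂ)‖ ≠ 0 :=
    norm_ne_zero_iff.mpr fun h => hc n (eq_neg_of_add_eq_zero_left h)
  have hGa0 : ‖Complex.GammaSeq a n‖ ≠ 0 :=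
    norm_ne_zero_iff.mpr (gammaSeq_ne_zero a ha hn')
  have hGb0 : ‖Complex.GammaSeq b n‖ ≠ 0 :=
    norm_ne_zero_iff.mpr (gammaSeq_ne_zero b hb hn')
  have ht' : ‖(ascPochhammer ℂ n).eval a * (ascPochhammer ℂ n).eval b /
      ((ascPochhammer ℂ n).eval c * (n.factorial : ℂ))‖ =
      ((n:ℝ)^(-ε) * (‖Complex.GammaSeq c n‖ * ‖c+n‖)) /
      (‖Complex.GammaSeq a n‖ * ‖a+n‖ *
        (‖Complex.GammaSeq b n‖ * ‖b+n‖)) := by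
    rw [eq_div_iff (by positivity)]
    simp only [norm_mul, norm_div]
    exact E
  have hpow : (n:ℝ)^(-ε) * (n:ℝ)^(1+ε) = (n:ℝ) := by
    rw [← Real.rpow_add hnR]
    norm_num
  have hY : (n:ℝ)^(1+ε) ≠ 0 := ne_of_gt (Real.rpow_pos_of_pos hnR _)
  have hX : (n:ℝ)^(-ε) = (n:ℝ) / (n:ℝ)^(1+ε) := by
    rw [eq_div_iff hY]; exact hpow
  rw [ht', hX]
  have hnR0 : (n:ℝ) ≠ 0 := ne_of_gt hnR
  field_simp

/-- For `c` not a nonpositive integer and `Re (c-a-b) > 0`, the hypergeometric series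
`₂F₁(a,b;c;z)` converges absolutely for every `z` with `|z| ≤ 1`. -/
theorem hypergeometric_summable_of_abs_le_one (a b c : ℂ)
    (hc : ∀ n : ℕ, c ≠ -(n : ℂ)) (h : 0 < (c - a - b).re)
    (z : ℂ) (hz : ‖z‖ ≤ 1) :
    Summable (hypTerm a b c z) := by
  by_cases hA : ∃ m : ℕ, a = -(m:ℂ)
  · obtain ⟨m, hm⟩ := hA
    refine summable_of_ne_finset_zero (s := Finset.range (m+1)) fun n hn => ?_
    have hmn : m < n := by simpa using hn
    unfold hypTerm
    rw [ascPochhammer_eval_prod,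
      Finset.prod_eq_zero (Finset.mem_range.mpr hmn) (by rw [hm]; ring)]
    simp
  by_cases hB : ∃ m : ℕ, b = -(m:ℂ)
  · obtain ⟨m, hm⟩ := hB
    refine summable_of_ne_finset_zero (s := Finset.range (m+1)) fun n hn => ?_
    have hmn : m < n := by simpa using hn
    unfold hypTerm
    rw [ascPochhammer_eval_prod b,
      Finset.prod_eq_zero (Finset.mem_range.mpr hmn) (by rw [hm]; ring)]
    simp
  push_neg at hA hB
  set ε := (c-a-b).re with hε
  set L := ‖Complex.Gamma c‖ * 1 /
    (‖Complex.Gamma a‖ * ‖Complex.Gamma b‖) with hL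
  have hF := tendsto_main a b c hA hB hc
  have hgsum : Summable (fun n : ℕ => (n:ℝ)^(-(1+ε))) :=
    Real.summable_nat_rpow.mpr (by linarith)
  refine summable_of_isBigO_nat hgsum ?_
  rw [Asymptotics.isBigO_iff]
  refine ⟨L+1, ?_⟩
  filter_upwards [hF.eventually_le_const (lt_add_one L), eventually_ge_atTop 1] with n hFn hn
  have hn' : n ≠ 0 := by omega
  have hnR : (0:ℝ) < n := by exact_mod_cast Nat.pos_of_ne_zero hn'
  have hinv : (n:ℝ)^(1+ε) * (n:ℝ)^(-(1+ε)) = 1 := by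
    rw [← Real.rpow_add hnR, show (1+ε) + -(1+ε) = 0 by ring, Real.rpow_zero]
  have hnn : (0:ℝ) ≤ (n:ℝ)^(-(1+ε)) := Real.rpow_nonneg (le_of_lt hnR) _
  have h1 : ‖hypTerm a b c z n‖ ≤ ‖(ascPochhammer ℂ n).eval a *
      (ascPochhammer ℂ n).eval b / ((ascPochhammer ℂ n).eval c * (n.factorial : ℂ))‖ := by
    rw [hypTerm, norm_mul, norm_pow]
    have hp : ‖z‖ ^ n ≤ 1 := pow_le_one₀ (norm_nonneg z) hz
    exact (mul_le_mul_of_nonneg_left hp (norm_nonneg _)).trans (le_of_eq (mul_one _))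
  have h2 : ‖(ascPochhammer ℂ n).eval a *
      (ascPochhammer ℂ n).eval b / ((ascPochhammer ℂ n).eval c * (n.factorial : ℂ))‖
      ≤ (L+1) * (n:ℝ)^(-(1+ε)) := by
    have := mul_le_mul_of_nonneg_right hFn hnn
    rw [mul_assoc, hinv, mul_one] at this
    exact this
  rw [Real.norm_of_nonneg hnn]
  exact h1.trans h2
end

section
/- Let a, b, c be complex numbers such that c is not a nonpositive integer, Re(c - a - b) > 0, and c - a is a nonpositive integer. Then lim_{t → 1⁻, t real} ₂F₁(a,b;c;t) = 0. (The constant term B₁ = Γ(c)Γ(c-a-b)/(Γ(c-a)Γ(c-b)) in the behaviour of ₂F₁ at 1 vanishes when c-a is a nonpositive integer.) -/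
open Complex Filter Set MeasureTheory

open Polynomial Topology

private noncomputable def asc (n : ℕ) (x : ℂ) : ℂ := (ascPochhammer ℂ n).eval x

private lemma asc_zero (x : ℂ) : asc 0 x = 1 := by simp [asc]

private lemma asc_succ (n : ℕ) (x : ℂ) : asc (n + 1) x = asc n x * (x + n) :=
  ascPochhammer_succ_eval n x

private lemma asc_succ_left (n : ℕ) (x : ℂ) : asc (n + 1) x = x * asc n (x + 1) := by
  simp [asc, ascPochhammer_succ_left, eval_mul, eval_comp]

private lemma asc_prod (n : ℕ) (x : ℂ) : asc n x = ∏ j ∈ Finset.range n, (x + j) := by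
  induction n with
  | zero => simp [asc_zero]
  | succ n ih => rw [asc_succ, ih, Finset.prod_range_succ]

private lemma asc_add (m n : ℕ) (x : ℂ) : asc (m + n) x = asc m x * asc n (x + m) := by
  have := congrArg (Polynomial.eval x) (ascPochhammer_mul (S := ℂ) m n)
  simpa [asc, eval_mul, eval_comp] using this.symm

private lemma asc_ne_zero {x : ℂ} (hx : ∀ k : ℕ, x ≠ -(k : ℂ)) (n : ℕ) : asc n x ≠ 0 := by
  rw [asc_prod]
  refine Finset.prod_ne_zero_iff.2 fun j _ => ?_
  intro hj
  exact hx j (by linear_combination hj)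


private lemma sum_asc_div_factorial (x : ℂ) (M : ℕ) :
    ∑ m ∈ Finset.range (M + 1), asc m x / m.factorial = asc M (x + 1) / M.factorial := by
  induction M with
  | zero => simp [asc_zero]
  | succ M ih =>
    rw [Finset.sum_range_succ, ih, asc_succ_left, asc_succ]
    have h1 : ((M + 1).factorial : ℂ) ≠ 0 := Nat.cast_ne_zero.2 (Nat.factorial_ne_zero _)
    have h2 : ((M).factorial : ℂ) ≠ 0 := Nat.cast_ne_zero.2 (Nat.factorial_ne_zero _)
    have h3 : ((M + 1).factorial : ℂ) = (M + 1) * M.factorial := by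
      push_cast [Nat.factorial_succ]; ring
    rw [div_add_div _ _ h2 h1, div_eq_div_iff (mul_ne_zero h2 h1) h1, h3]
    ring

private lemma tendsto_asc_div_factorial {x : ℂ} (hx : x.re < 0) :
    Tendsto (fun M : ℕ => asc M (x + 1) / M.factorial) atTop (𝓝 0) := by
  by_cases hz : ∀ k : ℕ, x + 1 ≠ -(k : ℂ)
  · -- nondegenerate case: use GammaSeq
    set z := x + 1 with hzdef
    have hzne : ∀ M : ℕ, asc M z ≠ 0 := fun M => asc_ne_zero hz M
    have hGamma : Complex.Gamma z ≠ 0 := Complex.Gamma_ne_zero hz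
    have key : ∀ M : ℕ, 1 ≤ M → asc M z / M.factorial
        = (M : ℂ) ^ z / (z + M) * (Complex.GammaSeq z M)⁻¹ := by
      intro M hM
      have hMne : (M : ℂ) ≠ 0 := Nat.cast_ne_zero.2 (by omega)
      have hcp : (M : ℂ) ^ z ≠ 0 := by
        intro h0
        rcases (cpow_eq_zero_iff _ _).1 h0 with ⟨h, -⟩
        exact hMne h
      have hGS : Complex.GammaSeq z M = (M : ℂ) ^ z * M.factorial / (asc M z * (z + M)) := by
        rw [Complex.GammaSeq, asc_prod, Finset.prod_range_succ]
      have hfac : ((M).factorial : ℂ) ≠ 0 := Nat.cast_ne_zero.2 (Nat.factorial_ne_zero _)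
      have hzM : z + M ≠ 0 := by
        intro h0
        exact hz M (by linear_combination h0)
      rw [hGS]
      field_simp
    have hre : z.re - 1 < 0 := by
      have : z.re = x.re + 1 := by simp [hzdef]
      rw [this]; linarith
    have tb : Tendsto (fun M : ℕ => 2 * (M : ℝ) ^ (z.re - 1)) atTop (𝓝 0) := by
      have h0 : Tendsto (fun y : ℝ => y ^ (z.re - 1)) atTop (𝓝 0) := by
        have := tendsto_rpow_neg_atTop (by linarith : (0:ℝ) < 1 - z.re)
        simpa [neg_sub] using this
      have h1 := h0.comp (tendsto_natCast_atTop_atTop (R := ℝ))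
      simpa using (h1.const_mul 2)
    have t1 : Tendsto (fun M : ℕ => (M : ℂ) ^ z / (z + M)) atTop (𝓝 0) := by
      apply squeeze_zero_norm' _ tb
      filter_upwards [eventually_ge_atTop (max 1 ⌈2 * ‖z‖⌉₊)] with M hM
      have hM1 : 1 ≤ M := le_trans (le_max_left _ _) hM
      have hM2 : 2 * ‖z‖ ≤ (M : ℝ) :=
        le_trans (Nat.le_ceil _) (Nat.cast_le.2 (le_trans (le_max_right _ _) hM))
      have hMpos : (0:ℝ) < (M:ℝ) := by positivity
      have hnum : ‖(M : ℂ) ^ z‖ = (M : ℝ) ^ z.re := by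
        rw [← Complex.ofReal_natCast]
        exact Complex.norm_cpow_eq_rpow_re_of_pos hMpos z
      have hden : (M : ℝ) / 2 ≤ ‖z + (M : ℂ)‖ := by
        have : ‖(M : ℂ)‖ - ‖z‖ ≤ ‖z + (M:ℂ)‖ := by
          have h4 : ‖(M:ℂ)‖ - ‖(-z)‖ ≤ ‖(M:ℂ) - -z‖ := norm_sub_norm_le _ _
          simp only [norm_neg, sub_neg_eq_add] at h4
          rw [add_comm]
          exact h4
        have hn : ‖(M:ℂ)‖ = (M:ℝ) := by simp
        rw [hn] at this
        have : (M:ℝ) - ‖z‖ ≤ ‖z + (M:ℂ)‖ := this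
        have hz2 : ‖z‖ ≤ (M:ℝ)/2 := by linarith
        linarith
      rw [norm_div, hnum]
      have hdpos : (0:ℝ) < (M:ℝ)/2 := by linarith
      calc (M:ℝ) ^ z.re / ‖z + (M:ℂ)‖ ≤ (M:ℝ) ^ z.re / ((M:ℝ)/2) := by
            apply div_le_div_of_nonneg_left _ hdpos hden
            positivity
        _ = 2 * (M:ℝ) ^ (z.re - 1) := by
            rw [Real.rpow_sub_one (ne_of_gt hMpos)]
            field_simp
    have t2 : Tendsto (fun M : ℕ => (Complex.GammaSeq z M)⁻¹) atTop (𝓝 (Complex.Gamma z)⁻¹) :=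
      (Complex.GammaSeq_tendsto_Gamma z).inv₀ hGamma
    have t3 := t1.mul t2
    rw [zero_mul] at t3
    apply t3.congr'
    filter_upwards [eventually_ge_atTop 1] with M hM
    exact (key M hM).symm
  · -- degenerate case: eventually zero
    push_neg at hz
    obtain ⟨k, hk⟩ := hz
    apply Tendsto.congr' _ (tendsto_const_nhds : Tendsto (fun _ : ℕ => (0:ℂ)) atTop (𝓝 0))
    filter_upwards [eventually_ge_atTop (k + 1)] with M hM
    rw [asc_prod]
    symm
    rw [_root_.div_eq_zero_iff]
    left
    apply Finset.prod_eq_zero (Finset.mem_range.2 (by omega : k < M))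
    linear_combination hk

private lemma asc_vandermonde (n : ℕ) (x y : ℂ) :
    asc n (x + y) = ∑ j ∈ Finset.range (n + 1), (n.choose j : ℂ) * asc j x * asc (n - j) y := by
  induction n with
  | zero => simp [asc_zero]
  | succ n ih =>
    rw [asc_succ, ih, Finset.sum_mul]
    have expand : ∀ j ∈ Finset.range (n + 1),
        (n.choose j : ℂ) * asc j x * asc (n - j) y * (x + y + n)
          = (n.choose j : ℂ) * (asc (j + 1) x * asc (n - j) y)
            + (n.choose j : ℂ) * (asc j x * asc (n - j + 1) y) := by
      intro j hj
      have hjn : j ≤ n := Nat.lt_succ_iff.mp (Finset.mem_range.mp hj)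
      have h3 : ((n - j : ℕ) : ℂ) = (n : ℂ) - (j : ℂ) := by
        push_cast [Nat.cast_sub hjn]; ring
      rw [asc_succ j x, asc_succ (n - j) y, h3]
      ring
    rw [Finset.sum_congr rfl expand, Finset.sum_add_distrib]
    have hRHS : ∑ j ∈ Finset.range (n + 1 + 1), ((n+1).choose j : ℂ) * asc j x * asc (n + 1 - j) y
        = ∑ j ∈ Finset.range (n + 1), (((n.choose j : ℂ)) + (n.choose (j+1) : ℂ))
            * (asc (j + 1) x * asc (n - j) y) + asc (n + 1) y := by
      rw [Finset.sum_range_succ']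
      congr 1
      · apply Finset.sum_congr rfl
        intro j hj
        have : (n + 1).choose (j + 1) = n.choose j + n.choose (j + 1) := Nat.choose_succ_succ n j
        have h2 : n + 1 - (j + 1) = n - j := by omega
        rw [this, h2]
        push_cast
        ring
      · simp [asc_zero]
    rw [hRHS]
    have hsplit : ∑ j ∈ Finset.range (n + 1), (((n.choose j : ℂ)) + (n.choose (j+1) : ℂ))
            * (asc (j + 1) x * asc (n - j) y)
        = ∑ j ∈ Finset.range (n + 1), (n.choose j : ℂ) * (asc (j + 1) x * asc (n - j) y)
          + ∑ j ∈ Finset.range (n + 1), (n.choose (j+1) : ℂ) * (asc (j + 1) x * asc (n - j) y) := by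
      rw [← Finset.sum_add_distrib]
      apply Finset.sum_congr rfl
      intro j _
      ring
    rw [hsplit]
    have hLHS2 : ∑ j ∈ Finset.range (n + 1), (n.choose j : ℂ) * (asc j x * asc (n - j + 1) y)
        = ∑ j ∈ Finset.range n, (n.choose (j+1) : ℂ) * (asc (j + 1) x * asc (n - j) y)
          + asc (n + 1) y := by
      rw [Finset.sum_range_succ']
      congr 1
      · apply Finset.sum_congr rfl
        intro j hj
        have h2 : n - (j + 1) + 1 = n - j := by
          have := Finset.mem_range.mp hj; omega
        rw [h2]
      · simp [asc_zero]
    rw [hLHS2]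
    have hlast : ∑ j ∈ Finset.range (n + 1), (n.choose (j+1) : ℂ) * (asc (j + 1) x * asc (n - j) y)
        = ∑ j ∈ Finset.range n, (n.choose (j+1) : ℂ) * (asc (j + 1) x * asc (n - j) y) := by
      rw [Finset.sum_range_succ]
      simp [Nat.choose_succ_self]
    rw [hlast]
    ring

/-- The Gauss hypergeometric function `₂F₁(a,b;c;z)`. -/
noncomputable def hyp (a b c z : ℂ) : ℂ := ∑' n, hypTerm a b c z n

/-- If `c` is not a nonpositive integer, `Re (c-a-b) > 0`, and `c - a` is a nonpositive
integer, then `₂F₁(a,b;c;t) → 0` as the real variable `t → 1⁻`. -/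
theorem hypergeometric_tendsto_zero_at_one (a b c : ℂ)
    (hc : ∀ n : ℕ, c ≠ -(n : ℂ)) (h : 0 < (c - a - b).re)
    (hca : ∃ n : ℕ, c - a = -(n : ℂ)) :
    Tendsto (fun t : ℝ => hyp a b c t) (nhdsWithin 1 (Iio 1)) (nhds 0) := by
  obtain ⟨n, hn⟩ := hca
  have ha : a = c + n := by linear_combination -hn
  have hb : b.re + n < 0 := by
    have e : c - a - b = -(n : ℂ) - b := by rw [hn]
    rw [e] at h
    simp only [sub_re, neg_re, natCast_re] at h
    linarith
  set f : ℕ → ℂ := fun m => asc m a * asc m b / (asc m c * m.factorial) with hf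
  have hcz : ∀ m : ℕ, asc m c ≠ 0 := asc_ne_zero hc
  have hfacm : ∀ m : ℕ, ((m.factorial : ℂ)) ≠ 0 :=
    fun m => Nat.cast_ne_zero.2 (Nat.factorial_ne_zero _)
  have key : ∀ m : ℕ, f m = ∑ j ∈ Finset.range (n + 1),
      ((n.choose j : ℂ) * asc (n - j) (c - b) * asc j b / asc n c)
        * (asc m (b + j) / m.factorial) := by
    intro m
    have h1 : asc n c * asc m a = asc m c * asc n (c + m) := by
      rw [ha, ← asc_add n m c, add_comm n m, asc_add m n c]
    have stepA : f m = asc n (c + m) * asc m b / (asc n c * m.factorial) := by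
      rw [hf]
      simp only
      rw [div_eq_div_iff (mul_ne_zero (hcz m) (hfacm m)) (mul_ne_zero (hcz n) (hfacm m))]
      linear_combination (asc m b * (m.factorial : ℂ)) * h1
    have h2 : asc n (c + m)
        = ∑ j ∈ Finset.range (n + 1), (n.choose j : ℂ) * asc j (b + m) * asc (n - j) (c - b) := by
      have hv := asc_vandermonde n (b + m) (c - b)
      rw [show (b + (m : ℂ)) + (c - b) = c + m by ring] at hv
      exact hv
    rw [stepA, h2, Finset.sum_mul, Finset.sum_div]
    apply Finset.sum_congr rfl
    intro j _
    have h3 : asc m b * asc j (b + m) = asc j b * asc m (b + j) := by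
      have e1 := asc_add m j b
      have e2 := asc_add j m b
      rw [add_comm m j, e2] at e1
      linear_combination -e1
    rw [div_mul_div_comm,
      div_eq_div_iff (mul_ne_zero (hcz n) (hfacm m)) (mul_ne_zero (hcz n) (hfacm m))]
    linear_combination ((n.choose j : ℂ) * asc (n - j) (c - b) * asc n c
      * (m.factorial : ℂ)) * h3
  have psum : ∀ M : ℕ, ∑ m ∈ Finset.range (M + 1), f m = ∑ j ∈ Finset.range (n + 1),
      ((n.choose j : ℂ) * asc (n - j) (c - b) * asc j b / asc n c)
        * (asc M (b + j + 1) / M.factorial) := by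
    intro M
    rw [Finset.sum_congr rfl fun m _ => key m, Finset.sum_comm]
    apply Finset.sum_congr rfl
    intro j _
    rw [← Finset.mul_sum, sum_asc_div_factorial (b + j) M]
  have tend1 : Tendsto (fun M : ℕ => ∑ m ∈ Finset.range (M + 1), f m) atTop (𝓝 0) := by
    have : Tendsto (fun M : ℕ => ∑ j ∈ Finset.range (n + 1),
        ((n.choose j : ℂ) * asc (n - j) (c - b) * asc j b / asc n c)
          * (asc M (b + j + 1) / M.factorial)) atTop (𝓝 0) := by
      have h0 : (0 : ℂ) = ∑ j ∈ Finset.range (n + 1),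
          ((n.choose j : ℂ) * asc (n - j) (c - b) * asc j b / asc n c) * 0 := by simp
      rw [h0]
      apply tendsto_finset_sum
      intro j hj
      apply Tendsto.const_mul
      have hjre : (b + (j : ℂ)).re < 0 := by
        have hjn : (j : ℝ) ≤ (n : ℝ) := by
          exact_mod_cast Nat.lt_succ_iff.mp (Finset.mem_range.mp hj)
        simp only [add_re, natCast_re]
        linarith
      exact tendsto_asc_div_factorial hjre
    exact this.congr fun M => (psum M).symm
  have htend : Tendsto (fun M : ℕ => ∑ m ∈ Finset.range M, f m) atTop (𝓝 0) :=
    (tendsto_add_atTop_iff_nat 1).1 tend1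
  have habel := Complex.tendsto_tsum_powerSeries_nhdsWithin_lt htend
  rw [tendsto_map'_iff] at habel
  exact habel
end

section
/- Let k₁ ≥ k₂ ≥ 1 be real numbers and let k₁₂ be a real number such that k₁₂ - k₁ - k₂ is a nonnegative integer. Then the limit lim_{t → 1⁻} (1-t)^{1-2k₁} · ₂F₁(k₁₂-k₁+k₂, 1-k₁₂-k₁+k₂; 2k₂; t) exists and equals the (finite) value of the terminating series ₂F₁(k₁+k₂-k₁₂, k₁+k₂+k₁₂-1; 2k₂; 1). In particular ₂F₁(k₁₂-k₁+k₂, -k₁₂-k₁+k₂+1; 2k₂; t) behaves like a constant times (1-t)^{2k₁-1} as t → 1⁻. -/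
open Complex Filter Set MeasureTheory

/-!
Euler's transformation `₂F₁(a,b;c;z) = (1-z)^(c-a-b) ₂F₁(c-a,c-b;c;z)` applies with
`c - a - b = 2k₁ - 1` and `c - a = k₁ + k₂ - k₁₂` a nonpositive integer, so
`(1-t)^(1-2k₁) ₂F₁(a,b;c;t)` equals the polynomial `₂F₁(c-a,c-b;c;t)`, continuous at `t = 1`.

Euler's transformation is the Cauchy product of `₂F₁(c-a,c-b;c;z)` with the binomial series
`(1-z)^(-w) = ∑ (w)ₙ/n! zⁿ`, `w = a + b - c`. The resulting coefficient identity
(Pfaff–Saalschütz) holds because both sides satisfy `(m+1)(c+m) uₘ₊₁ = (a+m)(b+m) uₘ`; for the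
Cauchy coefficients this recurrence is a telescoping sum along the antidiagonal with potential
`G(i,j) = i (c+i-1) Bᵢ Cⱼ`, where `Bᵢ`, `Cⱼ` are the coefficients of the two factors.
-/

section

open Finset Nat
open scoped Topology

theorem Ring.multichoose_eq_ascPochhammer_eval_div {𝕂 : Type*} [Field 𝕂] [CharZero 𝕂]
    (w : 𝕂) (n : ℕ) : Ring.multichoose w n = (ascPochhammer 𝕂 n).eval w / n ! := by
  rw [eq_div_iff (Nat.cast_ne_zero.2 n.factorial_ne_zero), mul_comm, ← nsmul_eq_mul,
    Ring.factorial_nsmul_multichoose_eq_ascPochhammer, Polynomial.ascPochhammer_smeval_eq_eval]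

theorem Ring.succ_mul_multichoose_succ {𝕂 : Type*} [Field 𝕂] [CharZero 𝕂] (w : 𝕂) (n : ℕ) :
    ((n : 𝕂) + 1) * Ring.multichoose w (n + 1) = (w + n) * Ring.multichoose w n := by
  have : (n ! : 𝕂) ≠ 0 := Nat.cast_ne_zero.2 n.factorial_ne_zero
  simp only [Ring.multichoose_eq_ascPochhammer_eval_div, ascPochhammer_succ_eval,
    factorial_succ, cast_mul, cast_succ]
  field_simp

noncomputable def hypCoeff (a b c : ℂ) (n : ℕ) : ℂ :=
  (ascPochhammer ℂ n).eval a * (ascPochhammer ℂ n).eval b /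
    ((ascPochhammer ℂ n).eval c * (n ! : ℂ))

theorem hypTerm_eq_hypCoeff_mul_pow (a b c z : ℂ) (n : ℕ) :
    hypTerm a b c z n = hypCoeff a b c n * z ^ n := rfl

@[simp]
theorem hypCoeff_zero (a b c : ℂ) : hypCoeff a b c 0 = 1 := by simp [hypCoeff]

theorem succ_mul_add_mul_hypCoeff_succ (a b : ℂ) {c : ℂ} (hc : ∀ n : ℕ, c + n ≠ 0) (n : ℕ) :
    ((n : ℂ) + 1) * (c + n) * hypCoeff a b c (n + 1) = (a + n) * (b + n) * hypCoeff a b c n := by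
  have hpoch : (ascPochhammer ℂ n).eval c ≠ 0 := by
    rw [Ne, ascPochhammer_eval_eq_zero_iff]
    rintro ⟨k, -, hk⟩
    exact hc k (by rw [hk]; ring)
  have : (n ! : ℂ) ≠ 0 := Nat.cast_ne_zero.2 n.factorial_ne_zero
  have := hc n
  simp only [hypCoeff, ascPochhammer_succ_eval, factorial_succ, cast_mul, cast_succ]
  field_simp

theorem Finset.Nat.sum_antidiagonal_sub_telescope {M : Type*} [AddCommGroup M]
    (G : ℕ → ℕ → M) (m : ℕ) :
    ∑ p ∈ antidiagonal m, (G p.1 (p.2 + 1) - G (p.1 + 1) p.2) = G 0 (m + 1) - G (m + 1) 0 := by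
  have h := (Finset.Nat.sum_antidiagonal_succ (n := m) (f := fun p => G p.1 p.2)).symm.trans
    (Finset.Nat.sum_antidiagonal_succ' (f := fun p => G p.1 p.2))
  rw [sum_sub_distrib]
  linear_combination (norm := abel) -h

section EulerCoefficients

variable (a b : ℂ) {c : ℂ}

theorem hypCoeff_multichoose_telescope (hc : ∀ n : ℕ, c + n ≠ 0) (i k : ℕ) :
    ((i + k : ℂ) + 1) * (c + (i + k)) *
        (hypCoeff (c - a) (c - b) c i * Ring.multichoose (a + b - c) (k + 1)) -
      (a + (i + k)) * (b + (i + k)) *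
        (hypCoeff (c - a) (c - b) c i * Ring.multichoose (a + b - c) k) =
      i * (c + i - 1) * hypCoeff (c - a) (c - b) c i * Ring.multichoose (a + b - c) (k + 1) -
        (i + 1 : ℕ) * (c + (i + 1 : ℕ) - 1) * hypCoeff (c - a) (c - b) c (i + 1) *
          Ring.multichoose (a + b - c) k := by
  have hB := succ_mul_add_mul_hypCoeff_succ (c - a) (c - b) hc i
  have hC := Ring.succ_mul_multichoose_succ (a + b - c) k
  push_cast
  linear_combination (c + 2 * i + k) * hypCoeff (c - a) (c - b) c i * hC +
    Ring.multichoose (a + b - c) k * hB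

theorem succ_mul_add_mul_sum_antidiagonal_succ (hc : ∀ n : ℕ, c + n ≠ 0) (m : ℕ) :
    ((m : ℂ) + 1) * (c + m) * ∑ p ∈ antidiagonal (m + 1),
        hypCoeff (c - a) (c - b) c p.1 * Ring.multichoose (a + b - c) p.2 =
      (a + m) * (b + m) * ∑ p ∈ antidiagonal m,
        hypCoeff (c - a) (c - b) c p.1 * Ring.multichoose (a + b - c) p.2 := by
  set G : ℕ → ℕ → ℂ := fun i j =>
    i * (c + i - 1) * hypCoeff (c - a) (c - b) c i * Ring.multichoose (a + b - c) j
  have htel : ∑ p ∈ antidiagonal m,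
      (((m : ℂ) + 1) * (c + m) *
          (hypCoeff (c - a) (c - b) c p.1 * Ring.multichoose (a + b - c) (p.2 + 1)) -
        (a + m) * (b + m) * (hypCoeff (c - a) (c - b) c p.1 * Ring.multichoose (a + b - c) p.2))
      = G 0 (m + 1) - G (m + 1) 0 := by
    rw [← Finset.Nat.sum_antidiagonal_sub_telescope G m]
    refine sum_congr rfl fun p hp => ?_
    rw [HasAntidiagonal.mem_antidiagonal] at hp
    rw [← hp]
    push_cast
    exact hypCoeff_multichoose_telescope a b hc p.1 p.2
  rw [sum_sub_distrib, ← mul_sum, ← mul_sum] at htel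
  rw [Finset.Nat.sum_antidiagonal_succ']
  simp only [G] at htel
  push_cast at htel
  simp only [Ring.multichoose_zero_right, zero_mul, mul_one] at htel ⊢
  linear_combination htel

theorem hypCoeff_eq_sum_antidiagonal (hc : ∀ n : ℕ, c + n ≠ 0) (m : ℕ) :
    hypCoeff a b c m = ∑ p ∈ antidiagonal m,
      hypCoeff (c - a) (c - b) c p.1 * Ring.multichoose (a + b - c) p.2 := by
  induction m with
  | zero => simp
  | succ m ih =>
    have hne : ((m : ℂ) + 1) * (c + m) ≠ 0 := mul_ne_zero (Nat.cast_add_one_ne_zero m) (hc m)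
    apply mul_left_cancel₀ hne
    rw [succ_mul_add_mul_hypCoeff_succ a b hc, succ_mul_add_mul_sum_antidiagonal_succ a b hc, ih]

end EulerCoefficients

theorem mem_eball_zero_one {E : Type*} [SeminormedAddCommGroup E] {z : E} :
    z ∈ Metric.eball 0 1 ↔ ‖z‖ < 1 := by
  rw [mem_eball_zero_iff, ← ofReal_norm, ENNReal.ofReal_lt_one]

theorem hypTerm_eq_ordinaryHypergeometricSeries (a b c z : ℂ) (n : ℕ) :
    hypTerm a b c z n = ordinaryHypergeometricSeries ℂ a b c n fun _ => z := by
  rw [ordinaryHypergeometricSeries_apply_eq, hypTerm, smul_eq_mul]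
  ring

theorem hyp_eq_ordinaryHypergeometric (a b c : ℂ) : hyp a b c = ₂F₁ a b c :=
  funext fun z => tsum_congr (hypTerm_eq_ordinaryHypergeometricSeries a b c z)

theorem one_le_radius_ordinaryHypergeometricSeries {𝕂 : Type*} (𝔸 : Type*) [RCLike 𝕂]
    [NormedDivisionRing 𝔸] [NormedAlgebra 𝕂 𝔸] (a b c : 𝕂) :
    1 ≤ (ordinaryHypergeometricSeries 𝔸 a b c).radius := by
  by_cases h : ∃ k : ℕ, (k : 𝕂) = -a ∨ (k : 𝕂) = -b ∨ (k : 𝕂) = -c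
  · obtain ⟨k, hk | hk | hk⟩ := h
    · rw [eq_neg_iff_add_eq_zero, add_comm, ← eq_neg_iff_add_eq_zero] at hk
      simp [hk, ordinaryHypergeometric_radius_top_of_neg_nat₁]
    · rw [eq_neg_iff_add_eq_zero, add_comm, ← eq_neg_iff_add_eq_zero] at hk
      simp [hk, ordinaryHypergeometric_radius_top_of_neg_nat₂]
    · rw [eq_neg_iff_add_eq_zero, add_comm, ← eq_neg_iff_add_eq_zero] at hk
      simp [hk, ordinaryHypergeometric_radius_top_of_neg_nat₃]
  · push Not at h
    rw [ordinaryHypergeometricSeries_radius_eq_one 𝔸 a b c h]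

theorem summable_norm_hypTerm (a b c : ℂ) {z : ℂ} (hz : ‖z‖ < 1) :
    Summable fun n => ‖hypTerm a b c z n‖ := by
  simp_rw [hypTerm_eq_ordinaryHypergeometricSeries]
  refine FormalMultilinearSeries.summable_norm_apply _ ?_
  exact Metric.eball_subset_eball (one_le_radius_ordinaryHypergeometricSeries ℂ a b c)
    (mem_eball_zero_one.2 hz)

theorem hasSum_multichoose_mul_pow (w : ℂ) {z : ℂ} (hz : ‖z‖ < 1) :
    HasSum (fun n => Ring.multichoose w n * z ^ n) ((1 - z) ^ (-w)) := by
  have h := (one_div_one_sub_cpow_hasFPowerSeriesOnBall_zero w).hasSum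
    (y := z) (mem_eball_zero_one.2 hz)
  simpa only [FormalMultilinearSeries.ofScalars_apply_eq, ← Ring.multichoose_eq, smul_eq_mul,
    zero_add, one_div, cpow_neg] using h

theorem summable_norm_multichoose_mul_pow (w : ℂ) {z : ℂ} (hz : ‖z‖ < 1) :
    Summable fun n => ‖Ring.multichoose w n * z ^ n‖ := by
  have h := FormalMultilinearSeries.summable_norm_apply _ (Metric.eball_subset_eball
    (one_div_one_sub_cpow_hasFPowerSeriesOnBall_zero w).r_le (mem_eball_zero_one.2 hz))
  simpa only [FormalMultilinearSeries.ofScalars_apply_eq, ← Ring.multichoose_eq,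
    smul_eq_mul] using h

theorem hyp_eq_one_sub_cpow_mul_hyp (a b : ℂ) {c : ℂ} (hc : ∀ n : ℕ, c + n ≠ 0) {z : ℂ}
    (hz : ‖z‖ < 1) : hyp a b c z = (1 - z) ^ (c - a - b) * hyp (c - a) (c - b) c z := by
  rw [show c - a - b = -(a + b - c) by ring,
    ← (hasSum_multichoose_mul_pow (a + b - c) hz).tsum_eq, mul_comm _ (hyp _ _ _ _), hyp, hyp,
    tsum_mul_tsum_eq_tsum_sum_antidiagonal_of_summable_norm (summable_norm_hypTerm _ _ _ hz)
      (summable_norm_multichoose_mul_pow _ hz)]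
  refine tsum_congr fun m => ?_
  rw [hypTerm_eq_hypCoeff_mul_pow, hypCoeff_eq_sum_antidiagonal a b hc, sum_mul]
  refine sum_congr rfl fun p hp => ?_
  rw [HasAntidiagonal.mem_antidiagonal] at hp
  rw [hypTerm_eq_hypCoeff_mul_pow, ← hp, pow_add]
  ring

theorem continuous_hyp_neg_natCast (n : ℕ) (b c : ℂ) : Continuous (hyp (-n) b c) := by
  rw [hyp_eq_ordinaryHypergeometric, ← continuousOn_univ, ← Metric.eball_top 0,
    ← ordinaryHypergeometric_radius_top_of_neg_nat₁ ℂ b c (k := n)]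
  exact FormalMultilinearSeries.continuousOn

theorem tendsto_one_sub_cpow_mul_hyp_of_sub_eq_neg_natCast (a b : ℂ) {c : ℂ}
    (hc : ∀ n : ℕ, c + n ≠ 0) {n : ℕ} (hn : c - a = -n) :
    Tendsto (fun t : ℝ => (1 - (t : ℂ)) ^ (a + b - c) * hyp a b c t) (𝓝[<] 1)
      (𝓝 (hyp (c - a) (c - b) c 1)) := by
  have hlim : Tendsto (fun t : ℝ => hyp (c - a) (c - b) c t) (𝓝[<] 1)
      (𝓝 (hyp (c - a) (c - b) c 1)) := by
    rw [hn, ← ofReal_one]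
    exact ((continuous_hyp_neg_natCast n _ c).comp continuous_ofReal).tendsto 1
      |>.mono_left nhdsWithin_le_nhds
  refine hlim.congr' (eventually_of_mem (Ioo_mem_nhdsLT one_pos) fun t ht => ?_)
  have hz : ‖(t : ℂ)‖ < 1 := by rw [norm_real, Real.norm_of_nonneg ht.1.le]; exact ht.2
  have h1t : 1 - (t : ℂ) ≠ 0 := sub_ne_zero.2 (by exact_mod_cast ht.2.ne')
  dsimp only
  rw [hyp_eq_one_sub_cpow_mul_hyp a b hc hz, ← mul_assoc, ← cpow_add _ _ h1t,
    show a + b - c + (c - a - b) = 0 by ring, cpow_zero, one_mul]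

end

theorem hypergeometric_behaviour_at_one_general (k₁ k₂ k₁₂ : ℝ)
    (h2 : 1 ≤ k₂) (h12 : ∃ n : ℕ, k₁₂ - k₁ - k₂ = n) :
    Tendsto (fun t : ℝ =>
        (((1 - t) ^ (1 - 2 * k₁) : ℝ) : ℂ) *
          hyp ((k₁₂ : ℂ) - k₁ + k₂) (1 - (k₁₂ : ℂ) - k₁ + k₂) (2 * (k₂ : ℂ)) t)
      (nhdsWithin 1 (Iio 1))
      (nhds (hyp ((k₁ : ℂ) + k₂ - k₁₂) ((k₁ : ℂ) + k₂ + k₁₂ - 1) (2 * (k₂ : ℂ)) 1)) := by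
  obtain ⟨n, hn⟩ := h12
  have hc (i : ℕ) : 2 * (k₂ : ℂ) + i ≠ 0 := by
    have : (0 : ℝ) < 2 * k₂ + i := by linarith [(i.cast_nonneg : (0 : ℝ) ≤ i)]
    exact_mod_cast this.ne'
  have hca : 2 * (k₂ : ℂ) - ((k₁₂ : ℂ) - k₁ + k₂) = -n := by
    have hn' := congrArg ofReal hn
    push_cast at hn'
    linear_combination -hn'
  have key := tendsto_one_sub_cpow_mul_hyp_of_sub_eq_neg_natCast _ (1 - (k₁₂ : ℂ) - k₁ + k₂) hc hca
  rw [show (k₁ : ℂ) + k₂ - k₁₂ = 2 * k₂ - (k₁₂ - k₁ + k₂) by ring,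
    show (k₁ : ℂ) + k₂ + k₁₂ - 1 = 2 * k₂ - (1 - k₁₂ - k₁ + k₂) by ring]
  refine key.congr' (eventually_nhdsWithin_of_forall fun t (ht : t < 1) => ?_)
  dsimp only
  rw [ofReal_cpow (sub_nonneg.2 ht.le)]
  push_cast
  ring_nf

/-- For `k₁ ≥ k₂ ≥ 1` and `k₁₂ - k₁ - k₂` a nonnegative integer,
`(1-t)^(1-2k₁) · ₂F₁(k₁₂-k₁+k₂, 1-k₁₂-k₁+k₂; 2k₂; t)` tends, as `t → 1⁻`, to the value
of the terminating series `₂F₁(k₁+k₂-k₁₂, k₁+k₂+k₁₂-1; 2k₂; 1)`; i.e. the hypergeometric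
function behaves like a constant times `(1-t)^(2k₁-1)` as `t → 1⁻`. -/
theorem hypergeometric_behaviour_at_one (k₁ k₂ k₁₂ : ℝ)
    (h21 : k₂ ≤ k₁) (h2 : 1 ≤ k₂) (h12 : ∃ n : ℕ, k₁₂ - k₁ - k₂ = n) :
    Tendsto (fun t : ℝ =>
        (((1 - t) ^ (1 - 2 * k₁) : ℝ) : ℂ) *
          hyp ((k₁₂ : ℂ) - k₁ + k₂) (1 - (k₁₂ : ℂ) - k₁ + k₂) (2 * (k₂ : ℂ)) t)
      (nhdsWithin 1 (Iio 1))
      (nhds (hyp ((k₁ : ℂ) + k₂ - k₁₂) ((k₁ : ℂ) + k₂ + k₁₂ - 1) (2 * (k₂ : ℂ)) 1)) :=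
  hypergeometric_behaviour_at_one_general k₁ k₂ k₁₂ h2 h12
end

section
/- Let k₁ ≥ k₂ ≥ 1 and k₁₂ ≥ 1 be real numbers and let p₁, p₂ be real. Define g(t) = (1-t)^{i p₁ + i p₂ + k₁₂ - 1} · t^{-i p₂ + k₂ - 1} · ₂F₁(k₁₂-k₁+k₂, k₁₂+k₁+k₂-1; 2k₁₂; 1-t) for t ∈ (1/2,1). Then g is bounded on (1/2,1), g is integrable with respect to Lebesgue measure on (1/2,1), and lim_{t → 1⁻} (1-t)^{1-k₁₂} · |g(t)| = 1. (The second integrand of I(+,−,𝒥) in the discrete-series case behaves like (1-t)^{k₁₂-1} as t → 1 and the integral converges.) -/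
open Complex Filter Set MeasureTheory

/-- The integrand of the second integral of `I(+,−,𝒥)` in the discrete-series case:
`g(t) = (1-t)^(ip₁+ip₂+k₁₂-1) t^(-ip₂+k₂-1) ₂F₁(k₁₂-k₁+k₂, k₁₂+k₁+k₂-1; 2k₁₂; 1-t)`. -/
noncomputable def gPN (k₁ k₂ k₁₂ p₁ p₂ : ℝ) (t : ℝ) : ℂ :=
  ((1 - t : ℝ) : ℂ) ^ (I * (p₁ : ℂ) + I * (p₂ : ℂ) + (k₁₂ : ℂ) - 1) *
    ((t : ℝ) : ℂ) ^ (-(I * (p₂ : ℂ)) + (k₂ : ℂ) - 1) *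
    hyp ((k₁₂ : ℂ) - k₁ + k₂) ((k₁₂ : ℂ) + k₁ + k₂ - 1) (2 * (k₁₂ : ℂ)) ((1 - t : ℝ) : ℂ)

section aux

open scoped Nat Topology

lemma mypoch_cast (x : ℝ) : ∀ n : ℕ,
    (ascPochhammer ℂ n).eval (x : ℂ) = (((ascPochhammer ℝ n).eval x : ℝ) : ℂ)
  | 0 => by simp
  | n + 1 => by
    rw [ascPochhammer_succ_eval, ascPochhammer_succ_eval, mypoch_cast x n]
    push_cast
    ring

lemma mypoch_abs_le (a : ℂ) : ∀ n : ℕ,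
    ‖(ascPochhammer ℂ n).eval a‖ ≤ (ascPochhammer ℝ n).eval (‖a‖ + 1)
  | 0 => by simp
  | n + 1 => by
    rw [ascPochhammer_succ_eval, ascPochhammer_succ_eval, norm_mul]
    have h1 := mypoch_abs_le a n
    have h2 : ‖a + n‖ ≤ ‖a‖ + 1 + n := by
      refine (norm_add_le a n).trans ?_
      rw [Complex.norm_natCast]
      linarith
    have h3 : (0:ℝ) < (ascPochhammer ℝ n).eval (‖a‖ + 1) :=
      ascPochhammer_pos n _ (by positivity)
    exact mul_le_mul h1 h2 (norm_nonneg _) h3.le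

lemma mypoch_ge_fact {c : ℝ} (hc : 2 ≤ c) : ∀ n : ℕ,
    ((n + 1)! : ℝ) ≤ (ascPochhammer ℝ n).eval c
  | 0 => by simp
  | n + 1 => by
    rw [ascPochhammer_succ_eval]
    have h1 := mypoch_ge_fact hc n
    have h2 : ((n + 1 + 1)! : ℝ) = ((n + 1)! : ℝ) * (n + 2) := by
      rw [Nat.factorial_succ (n+1)]
      push_cast
      ring
    rw [h2]
    have : (0:ℝ) < ((n+1)! : ℝ) := by positivity
    exact mul_le_mul h1 (by linarith) (by positivity) ((this.trans_le h1).le)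

lemma mytendsto_aux (A : ℝ) : Tendsto (fun n : ℕ => (A + n) / (n + 1)) atTop (𝓝 1) := by
  have h : (fun n : ℕ => (A + n) / (n + 1)) = fun n : ℕ => 1 + (A - 1) * (1 / (n + 1)) := by
    funext n
    have hn : (n : ℝ) + 1 ≠ 0 := by positivity
    field_simp
    ring
  rw [h]
  have := (tendsto_one_div_add_atTop_nhds_zero_nat.const_mul (A - 1))
  simpa using tendsto_const_nhds.add this

noncomputable def myBound (a b : ℂ) (n : ℕ) : ℝ :=
  (ascPochhammer ℝ n).eval (‖a‖ + 1) * (ascPochhammer ℝ n).eval (‖b‖ + 1) /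
    (((n + 1)! : ℝ) * (n ! : ℝ)) * (1 / 2) ^ n

lemma myBound_pos (a b : ℂ) (n : ℕ) : 0 < myBound a b n := by
  have hA := ascPochhammer_pos n (‖a‖ + 1) (by positivity)
  have hB := ascPochhammer_pos n (‖b‖ + 1) (by positivity)
  unfold myBound
  positivity

lemma myBound_summable (a b : ℂ) : Summable (myBound a b) := by
  set A := ‖a‖ + 1 with hAdef
  set B := ‖b‖ + 1 with hBdef
  refine summable_of_ratio_test_tendsto_lt_one (l := 1/2) (by norm_num)
    (Eventually.of_forall fun n => (myBound_pos a b n).ne') ?_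
  have hratio : (fun n : ℕ => ‖myBound a b (n + 1)‖ / ‖myBound a b n‖)
      = fun n : ℕ => ((A + n) / (n + 1)) * ((B + n) / (n + 2)) * (1 / 2) := by
    funext n
    rw [Real.norm_eq_abs, Real.norm_eq_abs, abs_of_pos (myBound_pos a b (n + 1)),
      abs_of_pos (myBound_pos a b n)]
    unfold myBound
    rw [← hAdef, ← hBdef]
    rw [ascPochhammer_succ_eval, ascPochhammer_succ_eval]
    have hA := (ascPochhammer_pos n A (by positivity)).ne'
    have hB := (ascPochhammer_pos n B (by positivity)).ne'
    have hf1 : ((n ! : ℝ)) ≠ 0 := by positivity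
    have hf3 : (((n + 1 + 1)! : ℝ)) = ((n + 1)! : ℝ) * (n + 2) := by
      rw [Nat.factorial_succ (n + 1)]; push_cast; ring
    have hf4 : (((n + 1)! : ℝ)) = (n ! : ℝ) * (n + 1) := by
      rw [Nat.factorial_succ]; push_cast; ring
    have hp : ((1 : ℝ) / 2) ^ n ≠ 0 := by positivity
    rw [hf3, hf4]
    have hn1 : ((n : ℝ) + 1) ≠ 0 := by positivity
    have hn2 : ((n : ℝ) + 2) ≠ 0 := by positivity
    field_simp
    ring
  rw [hratio]
  have h1 := mytendsto_aux A
  have h2 : Tendsto (fun n : ℕ => (B + n) / (n + 2)) atTop (𝓝 1) := by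
    have := (mytendsto_aux (B - 1)).comp (tendsto_add_atTop_nat 1)
    refine this.congr fun n => ?_
    simp only [Function.comp_apply]
    push_cast
    ring_nf
  have h3 := (h1.mul h2).mul (tendsto_const_nhds (x := (1 / 2 : ℝ)))
  simpa using h3

lemma hypTerm_norm_le (a b : ℂ) {c : ℝ} (hc : 2 ≤ c) (n : ℕ) (z : ℂ)
    (hz : ‖z‖ ≤ 1 / 2) : ‖hypTerm a b (c : ℂ) z n‖ ≤ myBound a b n := by
  have hposc : (0 : ℝ) < (ascPochhammer ℝ n).eval c := ascPochhammer_pos n c (by linarith)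
  have hA := ascPochhammer_pos n (‖a‖ + 1) (by positivity)
  have hB := ascPochhammer_pos n (‖b‖ + 1) (by positivity)
  have habs_c : ‖(ascPochhammer ℂ n).eval (c : ℂ)‖ = (ascPochhammer ℝ n).eval c := by
    rw [mypoch_cast c n, Complex.norm_real, Real.norm_eq_abs, abs_of_pos hposc]
  rw [hypTerm, norm_mul, norm_div, norm_mul, norm_mul, norm_pow,
    habs_c, Complex.norm_natCast]
  unfold myBound
  have hfact : (0 : ℝ) < (n ! : ℝ) := by positivity
  refine mul_le_mul ?_ ?_ (by positivity) (by positivity)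
  · refine div_le_div₀ (by positivity) ?_ (by positivity) ?_
    · exact mul_le_mul (mypoch_abs_le a n) (mypoch_abs_le b n) (norm_nonneg _) hA.le
    · exact mul_le_mul_of_nonneg_right (mypoch_ge_fact hc n) hfact.le
  · exact pow_le_pow_left₀ (norm_nonneg z) hz n

lemma myhyp_contOn (a b : ℂ) {c : ℝ} (hc : 2 ≤ c) :
    ContinuousOn (hyp a b (c : ℂ)) (Metric.closedBall (0 : ℂ) (1 / 2)) := by
  refine continuousOn_tsum (fun n => ?_) (myBound_summable a b) (fun n z hz => ?_)
  · simp only [hypTerm]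
    exact (continuous_const.mul (continuous_pow n)).continuousOn
  · refine hypTerm_norm_le a b hc n z ?_
    simpa [Complex.dist_eq] using Metric.mem_closedBall.mp hz

lemma myhyp_zero (a b c : ℂ) : hyp a b c 0 = 1 := by
  rw [hyp, tsum_eq_single 0]
  · simp [hypTerm]
  · intro n hn
    simp [hypTerm, zero_pow hn]

end aux

open scoped Topology

/-- For `k₁ ≥ k₂ ≥ 1` and `k₁₂ ≥ 1`, the second integrand of `I(+,−,𝒥)` in the
discrete-series case is bounded on `(1/2,1)`, integrable on `(1/2,1)`, and behaves like
`(1-t)^(k₁₂-1)` as `t → 1⁻`. -/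
theorem integral_PN_second_piece_discrete (k₁ k₂ k₁₂ p₁ p₂ : ℝ)
    (h21 : k₂ ≤ k₁) (h2 : 1 ≤ k₂) (h12 : 1 ≤ k₁₂) :
    (∃ C : ℝ, ∀ t ∈ Ioo (1 / 2 : ℝ) 1, ‖gPN k₁ k₂ k₁₂ p₁ p₂ t‖ ≤ C) ∧
    IntegrableOn (gPN k₁ k₂ k₁₂ p₁ p₂) (Ioo (1 / 2) 1) volume ∧
    Tendsto (fun t : ℝ => (1 - t) ^ (1 - k₁₂) * ‖gPN k₁ k₂ k₁₂ p₁ p₂ t‖)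
      (nhdsWithin 1 (Iio 1)) (nhds 1) := by
  have hc : (2 : ℝ) ≤ 2 * k₁₂ := by linarith
  set a : ℂ := (k₁₂ : ℂ) - k₁ + k₂ with ha
  set b : ℂ := (k₁₂ : ℂ) + k₁ + k₂ - 1 with hb
  have hcast : (2 * (k₁₂ : ℂ)) = ((2 * k₁₂ : ℝ) : ℂ) := by push_cast; ring
  have hcont : ContinuousOn (hyp a b (((2 * k₁₂ : ℝ)) : ℂ)) (Metric.closedBall (0 : ℂ) (1 / 2)) :=
    myhyp_contOn a b hc
  have hmem : ∀ t ∈ Ioo (1 / 2 : ℝ) 1,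
      ((1 - t : ℝ) : ℂ) ∈ Metric.closedBall (0 : ℂ) (1 / 2) := by
    intro t ht
    rw [Metric.mem_closedBall, Complex.dist_eq, sub_zero, Complex.norm_real, Real.norm_eq_abs,
      _root_.abs_of_nonneg (by linarith [ht.2] : (0 : ℝ) ≤ 1 - t)]
    linarith [ht.1]
  have habs : ∀ t ∈ Ioo (1 / 2 : ℝ) 1, ‖gPN k₁ k₂ k₁₂ p₁ p₂ t‖ =
      (1 - t) ^ (k₁₂ - 1) * t ^ (k₂ - 1) *
        ‖hyp a b (((2 * k₁₂ : ℝ)) : ℂ) ((1 - t : ℝ) : ℂ)‖ := by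
    intro t ht
    have h1t : (0 : ℝ) < 1 - t := by linarith [ht.2]
    have h0t : (0 : ℝ) < t := by linarith [ht.1]
    have hre1 : (I * (p₁ : ℂ) + I * (p₂ : ℂ) + (k₁₂ : ℂ) - 1).re = k₁₂ - 1 := by simp
    have hre2 : (-(I * (p₂ : ℂ)) + (k₂ : ℂ) - 1).re = k₂ - 1 := by simp
    rw [gPN, hcast, norm_mul, norm_mul, Complex.norm_cpow_eq_rpow_re_of_pos h1t,
      Complex.norm_cpow_eq_rpow_re_of_pos h0t, hre1, hre2]
  obtain ⟨M, hM⟩ := (isCompact_closedBall (0 : ℂ) (1 / 2)).exists_bound_of_continuousOn hcont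
  have hM1 : (1 : ℝ) ≤ M := by
    have := hM 0 (Metric.mem_closedBall_self (by norm_num))
    simpa [myhyp_zero] using this
  have hbd : ∀ t ∈ Ioo (1 / 2 : ℝ) 1, ‖gPN k₁ k₂ k₁₂ p₁ p₂ t‖ ≤ M := by
    intro t ht
    rw [habs t ht]
    have b1 : (1 - t) ^ (k₁₂ - 1) ≤ 1 :=
      Real.rpow_le_one (by linarith [ht.2]) (by linarith [ht.1]) (by linarith)
    have b2 : t ^ (k₂ - 1) ≤ 1 :=
      Real.rpow_le_one (by linarith [ht.1]) ht.2.le (by linarith)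
    have b3 : ‖hyp a b (((2 * k₁₂ : ℝ)) : ℂ) ((1 - t : ℝ) : ℂ)‖ ≤ M := by
      simpa using hM _ (hmem t ht)
    calc (1 - t) ^ (k₁₂ - 1) * t ^ (k₂ - 1) *
          ‖hyp a b (((2 * k₁₂ : ℝ)) : ℂ) ((1 - t : ℝ) : ℂ)‖
        ≤ 1 * 1 * M := by
          refine mul_le_mul (mul_le_mul b1 b2 (Real.rpow_nonneg (by linarith [ht.1]) _)
            zero_le_one) b3 (norm_nonneg _) (by norm_num)
      _ = M := by ring
  have hgcont : ContinuousOn (gPN k₁ k₂ k₁₂ p₁ p₂) (Ioo (1 / 2 : ℝ) 1) := by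
    intro t ht
    have h1t : (0 : ℝ) < 1 - t := by linarith [ht.2]
    have h0t : (0 : ℝ) < t := by linarith [ht.1]
    have c1 : ContinuousAt
        (fun t : ℝ => ((1 - t : ℝ) : ℂ) ^ (I * (p₁ : ℂ) + I * (p₂ : ℂ) + (k₁₂ : ℂ) - 1)) t := by
      refine ContinuousAt.cpow ?_ continuousAt_const ?_
      · exact Complex.continuous_ofReal.continuousAt.comp
          ((continuous_const.sub continuous_id).continuousAt)
      · exact Complex.ofReal_mem_slitPlane.mpr h1t
    have c2 : ContinuousAt
        (fun t : ℝ => ((t : ℝ) : ℂ) ^ (-(I * (p₂ : ℂ)) + (k₂ : ℂ) - 1)) t := by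
      refine ContinuousAt.cpow ?_ continuousAt_const ?_
      · exact Complex.continuous_ofReal.continuousAt
      · exact Complex.ofReal_mem_slitPlane.mpr h0t
    have c3 : ContinuousWithinAt
        (fun t : ℝ => hyp a b (((2 * k₁₂ : ℝ)) : ℂ) ((1 - t : ℝ) : ℂ)) (Ioo (1 / 2 : ℝ) 1) t := by
      refine (hcont.comp ?_ hmem) t ht
      exact (Complex.continuous_ofReal.comp (continuous_const.sub continuous_id)).continuousOn
    have hcw := ((c1.continuousWithinAt.mul c2.continuousWithinAt).mul c3)
    exact hcw.congr (fun y _ => by simp only [gPN, hcast, Pi.mul_apply, ha, hb]) (by simp only [gPN, hcast, Pi.mul_apply, ha, hb])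
  refine ⟨⟨M, hbd⟩, ?_, ?_⟩
  · refine ⟨hgcont.aestronglyMeasurable measurableSet_Ioo, ?_⟩
    refine MeasureTheory.HasFiniteIntegral.restrict_of_bounded (C := M) measure_Ioo_lt_top ?_
    filter_upwards [ae_restrict_mem measurableSet_Ioo] with t ht
    simpa using hbd t ht
  · have hIooMem : Ioo (1 / 2 : ℝ) 1 ∈ 𝓝[<] (1 : ℝ) :=
      Ioo_mem_nhdsLT_of_mem ⟨by norm_num, le_refl 1⟩
    have hzmap : Tendsto (fun t : ℝ => ((1 - t : ℝ) : ℂ)) (𝓝[<] (1 : ℝ))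
        (𝓝[Metric.closedBall (0 : ℂ) (1 / 2)] 0) := by
      rw [tendsto_nhdsWithin_iff]
      constructor
      · have h0 : Tendsto (fun t : ℝ => ((1 - t : ℝ) : ℂ)) (𝓝 (1 : ℝ)) (𝓝 ((1 - 1 : ℝ) : ℂ)) :=
          ((Complex.continuous_ofReal.comp (continuous_const.sub continuous_id)).tendsto 1)
        have h0' : (((1 - 1 : ℝ)) : ℂ) = 0 := by norm_num
        rw [h0'] at h0
        exact h0.mono_left nhdsWithin_le_nhds
      · filter_upwards [hIooMem] with t ht using hmem t ht
    have h3 : Tendsto (fun t : ℝ =>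
        ‖hyp a b (((2 * k₁₂ : ℝ)) : ℂ) ((1 - t : ℝ) : ℂ)‖) (𝓝[<] (1 : ℝ)) (𝓝 1) := by
      have h0m : (0 : ℂ) ∈ Metric.closedBall (0 : ℂ) (1 / 2) := Metric.mem_closedBall_self (by norm_num)
      have hT := (hcont 0 h0m).tendsto.comp hzmap
      rw [myhyp_zero] at hT
      have := (continuous_norm.tendsto 1).comp hT
      simpa [Function.comp_def] using this
    have h4 : Tendsto (fun t : ℝ => t ^ (k₂ - 1)) (𝓝[<] (1 : ℝ)) (𝓝 1) := by
      have hct : ContinuousAt (fun t : ℝ => t ^ (k₂ - 1)) 1 :=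
        Real.continuousAt_rpow_const 1 _ (Or.inl one_ne_zero)
      have hmono := hct.tendsto.mono_left (nhdsWithin_le_nhds : 𝓝[<] (1:ℝ) ≤ 𝓝 1)
      simpa [Real.one_rpow] using hmono
    have hfinal := h4.mul h3
    rw [one_mul] at hfinal
    refine hfinal.congr' ?_
    filter_upwards [hIooMem] with t ht
    have h1t : (0 : ℝ) < 1 - t := by linarith [ht.2]
    rw [habs t ht]
    have hswap : (1 - t) ^ (1 - k₁₂) * ((1 - t) ^ (k₁₂ - 1) * t ^ (k₂ - 1) *
        ‖hyp a b (((2 * k₁₂ : ℝ)) : ℂ) ((1 - t : ℝ) : ℂ)‖)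
        = ((1 - t) ^ (1 - k₁₂) * (1 - t) ^ (k₁₂ - 1)) * (t ^ (k₂ - 1) *
        ‖hyp a b (((2 * k₁₂ : ℝ)) : ℂ) ((1 - t : ℝ) : ℂ)‖) := by ring
    rw [hswap, ← Real.rpow_add h1t]
    norm_num
end
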